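/- arXiv:1509.02279 — 2 statements merged into one kernel-verified Lean document; each statement's English description precedes it below -/
import Mathlib

section
/- Let 1 < p < 2, 0 < q ≤ 1/p, and B = min{n(2-p)(p/(p-1))^{p-1}, 1}. Define v(x,t) = (-t)^{1/(2-p)} (B - |x|^{p/(p-1)}) on Θ = {(x,t): |x| < (-t)^q, -1 < t < 0}. Then ∂_t v - Δ_p v ≥ (n (p/(p-1))^{p-1} - B/(2-p)) (-t)^{(p-1)/(2-p)} ≥ 0 pointwise in Θ (away from x = 0 where v fails to be twice differentiable). -/
/-!
For `β = p/(p-1)` the spatial gradient of `c (B - ‖y‖^β)` is `-cβ‖y‖^(β-2) y`, and since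
`(β-2)(p-1) + (p-2) = 0` the flux `|∇v|^(p-2) ∇v` is the linear field `-(cβ)^(p-1) y`, smooth
also at `y = 0`. Hence `Δ_p v = -n β^(p-1) (-t)^((p-1)/(2-p))`, while
`∂_t v = -(-t)^((p-1)/(2-p)) (B - ‖x‖^β)/(2-p)`; the difference exceeds the claimed bound by
`(-t)^((p-1)/(2-p)) ‖x‖^β/(2-p) ≥ 0`, and the bound is nonnegative because
`B ≤ n(2-p)β^(p-1)`.
-/

open Real Filter Set

/-- The p-Laplacian `div(|∇u|^{p-2} ∇u)` computed via Fréchet derivatives. -/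
noncomputable def pLap (p : ℝ) {n : ℕ} (u : EuclideanSpace ℝ (Fin n) → ℝ)
    (x : EuclideanSpace ℝ (Fin n)) : ℝ :=
  ∑ i, (inner ℝ (fderiv ℝ (fun y => ‖gradient u y‖ ^ (p - 2) • gradient u y) x
      (EuclideanSpace.single i 1)) (EuclideanSpace.single i (1 : ℝ)) : ℝ)

open Topology

section RadialProfile

variable {E : Type*} [NormedAddCommGroup E] [InnerProductSpace ℝ E] [CompleteSpace E]

noncomputable def pFlux (p : ℝ) (u : E → ℝ) (y : E) : E :=
  ‖gradient u y‖ ^ (p - 2) • gradient u y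

theorem gradient_const_mul_sub_norm_rpow (c a : ℝ) {β : ℝ} (hβ : 1 < β) (y : E) :
    gradient (fun z => c * (a - ‖z‖ ^ β)) y = -(c * β * ‖y‖ ^ (β - 2)) • y := by
  refine HasGradientAt.gradient ?_
  rw [hasGradientAt_iff_hasFDerivAt]
  refine (((hasFDerivAt_norm_rpow y hβ).const_sub a).const_mul c).congr_fderiv ?_
  ext z
  simp only [smul_neg, neg_apply, smul_apply, coe_innerSL_apply, smul_eq_mul, neg_smul, map_neg,
    map_smul, InnerProductSpace.toDual_apply_apply, neg_inj]
  ring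

theorem pFlux_const_mul_sub_norm_rpow {p : ℝ} (hp : 1 < p) {c : ℝ} (hc : 0 ≤ c) (a : ℝ)
    (y : E) :
    pFlux p (fun z => c * (a - ‖z‖ ^ (p / (p - 1)))) y
      = -(c ^ (p - 1) * (p / (p - 1)) ^ (p - 1)) • y := by
  set β := p / (p - 1) with hβ_def
  have hp1 : 0 < p - 1 := by linarith
  have hβ : 1 < β := by rw [hβ_def, one_lt_div hp1]; linarith
  rw [pFlux, gradient_const_mul_sub_norm_rpow c a hβ]
  rcases eq_or_ne y 0 with rfl | hy
  · simp
  have hny : 0 < ‖y‖ := norm_pos_iff.mpr hy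
  have hs : 0 ≤ c * β * ‖y‖ ^ (β - 2) := by positivity
  have hexp : (β - 2) * (p - 1) + (p - 2) = 0 := by
    rw [hβ_def]; field_simp; ring
  rw [smul_smul, norm_smul, norm_neg, Real.norm_of_nonneg hs]
  congr 1
  calc (c * β * ‖y‖ ^ (β - 2) * ‖y‖) ^ (p - 2) * -(c * β * ‖y‖ ^ (β - 2))
      = -((c * β * ‖y‖ ^ (β - 2)) ^ (p - 2 + 1) * ‖y‖ ^ (p - 2)) := by
        rw [Real.mul_rpow hs hny.le, Real.rpow_add_one' hs (by linarith)]; ring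
    _ = -((c * β) ^ (p - 1) * ‖y‖ ^ ((β - 2) * (p - 1) + (p - 2))) := by
        rw [show p - 2 + 1 = p - 1 by ring, Real.mul_rpow (by positivity) (by positivity),
          ← Real.rpow_mul hny.le, Real.rpow_add hny]
        ring
    _ = -(c ^ (p - 1) * β ^ (p - 1)) := by
        rw [hexp, Real.rpow_zero, Real.mul_rpow hc (by positivity)]; ring

end RadialProfile

theorem pLap_eq_of_pFlux_eventuallyEq {p : ℝ} {n : ℕ} {u : EuclideanSpace ℝ (Fin n) → ℝ}
    {x : EuclideanSpace ℝ (Fin n)} {k : ℝ} (h : pFlux p u =ᶠ[𝓝 x] fun y => k • y) :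
    pLap p u x = n * k := by
  have hderiv : fderiv ℝ (pFlux p u) x = k • ContinuousLinearMap.id ℝ _ := by
    rw [h.fderiv_eq]
    exact ((hasFDerivAt_id x).const_smul k).fderiv
  change ∑ i, inner ℝ (fderiv ℝ (pFlux p u) x _) _ = _
  simp [hderiv, real_inner_smul_left]

theorem pLap_const_mul_sub_norm_rpow {p : ℝ} (hp : 1 < p) {n : ℕ} {c : ℝ} (hc : 0 ≤ c)
    (a : ℝ) (x : EuclideanSpace ℝ (Fin n)) :
    pLap p (fun z => c * (a - ‖z‖ ^ (p / (p - 1)))) x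
      = -(n * c ^ (p - 1) * (p / (p - 1)) ^ (p - 1)) := by
  rw [pLap_eq_of_pFlux_eventuallyEq (Eventually.of_forall
    (pFlux_const_mul_sub_norm_rpow hp hc a))]
  ring

theorem hasDerivAt_neg_rpow_mul (α b : ℝ) {t : ℝ} (ht : t < 0) :
    HasDerivAt (fun s => (-s) ^ α * b) (-(α * (-t) ^ (α - 1) * b)) t := by
  have h := ((hasDerivAt_neg t).rpow_const (p := α) (Or.inl (neg_ne_zero.mpr ht.ne))).mul_const b
  refine h.congr_deriv ?_
  ring

theorem traditional_barrier_supersolution_general (p q : ℝ) (hp1 : 1 < p) (hp2 : p < 2)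
    (n : ℕ) (B : ℝ)
    (hB : B = min (n * (2 - p) * (p / (p - 1)) ^ (p - 1)) 1)
    (Θ : Set (EuclideanSpace ℝ (Fin n) × ℝ))
    (hΘ : Θ = {z : EuclideanSpace ℝ (Fin n) × ℝ |
      ‖z.1‖ < (-z.2) ^ q ∧ -1 < z.2 ∧ z.2 < 0})
    (v : EuclideanSpace ℝ (Fin n) → ℝ → ℝ)
    (hv : ∀ x t, v x t = (-t) ^ (1 / (2 - p)) * (B - ‖x‖ ^ (p / (p - 1))))
    (x : EuclideanSpace ℝ (Fin n)) (t : ℝ) (hmem : (x, t) ∈ Θ) :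
    deriv (v x) t - pLap p (fun y => v y t) x ≥
      (n * (p / (p - 1)) ^ (p - 1) - B / (2 - p)) * (-t) ^ ((p - 1) / (2 - p)) ∧
    (n * (p / (p - 1)) ^ (p - 1) - B / (2 - p)) * (-t) ^ ((p - 1) / (2 - p)) ≥ 0 := by
  have ht : t < 0 := by rw [hΘ] at hmem; exact hmem.2.2
  have h2p : 0 < 2 - p := by linarith
  have ht' : 0 < -t := by linarith
  set β := p / (p - 1)
  set c := (-t) ^ (1 / (2 - p))
  set T := (-t) ^ ((p - 1) / (2 - p))
  have hc : c ^ (p - 1) = T := by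
    rw [← Real.rpow_mul (by linarith)]; congr 1; field_simp
  have hT : (-t) ^ (1 / (2 - p) - 1) = T := by congr 1; field_simp; ring
  have htime : deriv (v x) t = -(1 / (2 - p) * T * (B - ‖x‖ ^ β)) := by
    rw [funext (hv x), (hasDerivAt_neg_rpow_mul _ _ ht).deriv, hT]
  have hspace : pLap p (fun y => v y t) x = -(n * T * β ^ (p - 1)) := by
    rw [funext (hv · t), pLap_const_mul_sub_norm_rpow hp1 (rpow_pos_of_pos ht' _).le, hc]
  have hT_pos : 0 < T := rpow_pos_of_pos ht' _
  have hBle : B / (2 - p) ≤ n * β ^ (p - 1) := by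
    rw [div_le_iff₀ h2p, hB]; linarith [min_le_left (n * (2 - p) * β ^ (p - 1)) 1]
  constructor
  · rw [htime, hspace, ge_iff_le, ← sub_nonneg]
    calc 0 ≤ T * ‖x‖ ^ β / (2 - p) := by positivity
      _ = _ := by ring
  · exact mul_nonneg (by linarith) hT_pos.le

/-- For `1 < p < 2`, `0 < q ≤ 1/p` and `B = min{n(2-p)(p/(p-1))^{p-1}, 1}`, the function
`v(x,t) = (-t)^{1/(2-p)}(B - |x|^{p/(p-1)})` satisfies
`∂_t v - Δ_p v ≥ (n(p/(p-1))^{p-1} - B/(2-p))(-t)^{(p-1)/(2-p)} ≥ 0` in `Θ ∩ {x ≠ 0}`. -/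
theorem traditional_barrier_supersolution (p q : ℝ) (hp1 : 1 < p) (hp2 : p < 2)
    (hq0 : 0 < q) (hq : q ≤ 1 / p) (n : ℕ) (hn : 1 ≤ n) (B : ℝ)
    (hB : B = min (n * (2 - p) * (p / (p - 1)) ^ (p - 1)) 1)
    (Θ : Set (EuclideanSpace ℝ (Fin n) × ℝ))
    (hΘ : Θ = {z : EuclideanSpace ℝ (Fin n) × ℝ |
      ‖z.1‖ < (-z.2) ^ q ∧ -1 < z.2 ∧ z.2 < 0})
    (v : EuclideanSpace ℝ (Fin n) → ℝ → ℝ)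
    (hv : ∀ x t, v x t = (-t) ^ (1 / (2 - p)) * (B - ‖x‖ ^ (p / (p - 1))))
    (x : EuclideanSpace ℝ (Fin n)) (t : ℝ) (hmem : (x, t) ∈ Θ) (hx : x ≠ 0) :
    deriv (v x) t - pLap p (fun y => v y t) x ≥
      (n * (p / (p - 1)) ^ (p - 1) - B / (2 - p)) * (-t) ^ ((p - 1) / (2 - p)) ∧
    (n * (p / (p - 1)) ^ (p - 1) - B / (2 - p)) * (-t) ^ ((p - 1) / (2 - p)) ≥ 0 :=
  traditional_barrier_supersolution_general p q hp1 hp2 n B hB Θ hΘ v hv x t hmem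
end

section
/- Let p > 2, λ = n(p-2)+p, β = n(p-2)/λ, and 0 < β < 1 (which holds automatically). Let A = (β/λ · (1 - 2/p)^{p-1})^{1/(p-2)} and u(x,t) = A(|x|^p/(-t)^β)^{1/(p-2)} on Θ = {(x,t): |x| < (-t)^q, -1 < t < 0} with 0 < β < pq ≤ 1. Then ∂_t u - Δ_p u ≥ 0 pointwise in Θ ∩ {x ≠ 0}; specifically ∂_t u - Δ_p u = (A|x|^α/((p-2)(-t)^{β/(p-2)+1}))(β - A^{p-2} α^{p-1} λ (-t)^{1-β}) ≥ 0 where α = p/(p-2). -/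
/-!
Writing `s = -t`, the function is separable: `u = A s^(-β/(p-2)) |x|^α`. The exponent
`α = p/(p-2)` is the one for which the flux `|∇u|^(p-2) ∇u` of a radial power `c|x|^α` is
again `(cα)^(p-1) |x|^α x`, whose divergence is `(cα)^(p-1) (n + α) |x|^α`. Hence `∂_t u - Δ_p u`
factors as stated, and the choice of `A` turns the bracket into `β (1 - s^(1-β))`, which is
nonnegative for `0 < s < 1` and `β ≤ pq ≤ 1`.
-/

open Real Filter Set

open Topology

section NormRpow

variable {E : Type*} [NormedAddCommGroup E] [InnerProductSpace ℝ E] {x : E}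

theorem hasFDerivAt_norm_rpow_of_ne_zero (hx : x ≠ 0) (c : ℝ) :
    HasFDerivAt (fun z : E ↦ ‖z‖ ^ c) ((c * ‖x‖ ^ (c - 2)) • innerSL ℝ x) x := by
  refine HasStrictFDerivAt.hasFDerivAt ?_
  convert! (hasStrictFDerivAt_norm_sq x).rpow_const (p := c / 2) (by simp [hx]) using 0
  simp_rw [← Real.rpow_natCast_mul (norm_nonneg _), ← Nat.cast_smul_eq_nsmul ℝ, smul_smul]
  ring_nf

theorem hasGradientAt_const_mul_norm_rpow [CompleteSpace E] (hx : x ≠ 0) (k c : ℝ) :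
    HasGradientAt (fun z : E ↦ k * ‖z‖ ^ c) ((k * c * ‖x‖ ^ (c - 2)) • x) x := by
  refine hasGradientAt_iff_hasFDerivAt.mpr
    (((hasFDerivAt_norm_rpow_of_ne_zero hx c).const_mul k).congr_fderiv ?_)
  ext z
  simp only [smul_apply, coe_innerSL_apply, smul_eq_mul, map_smul,
    InnerProductSpace.toDual_apply_apply]
  ring

theorem hasFDerivAt_const_smul_norm_rpow_smul (hx : x ≠ 0) (k γ : ℝ) :
    HasFDerivAt (fun z : E ↦ k • ‖z‖ ^ γ • z)
      (k • (‖x‖ ^ γ • ContinuousLinearMap.id ℝ E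
        + ((γ * ‖x‖ ^ (γ - 2)) • innerSL ℝ x).smulRight x)) x :=
  ((hasFDerivAt_norm_rpow_of_ne_zero hx γ).smul (hasFDerivAt_id x)).const_smul k

theorem norm_smul_rpow_smul {k : ℝ} (hk : 0 < k) (z : E) (r : ℝ) :
    ‖k • z‖ ^ r • (k • z) = (k ^ (r + 1) * ‖z‖ ^ r) • z := by
  rw [norm_smul, norm_of_nonneg hk.le, mul_rpow hk.le (norm_nonneg z), smul_smul,
    rpow_add_one hk.ne']
  ring_nf

end NormRpow

section PLaplacian

variable {n : ℕ} {x : EuclideanSpace ℝ (Fin n)}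

theorem sum_inner_fderiv_const_smul_norm_rpow_smul (hx : x ≠ 0) (k γ : ℝ) :
    ∑ i, inner ℝ (fderiv ℝ (fun z ↦ k • ‖z‖ ^ γ • z) x (EuclideanSpace.single i 1))
      (EuclideanSpace.single i (1 : ℝ)) = k * (n + γ) * ‖x‖ ^ γ := by
  have hsq : ∑ i, x i ^ 2 = ‖x‖ ^ 2 := by
    simp [EuclideanSpace.norm_sq_eq]
  have hpow : ‖x‖ ^ (γ - 2) * ‖x‖ ^ 2 = ‖x‖ ^ γ := by
    rw [← rpow_natCast, ← rpow_add (norm_pos_iff.mpr hx)]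
    norm_num
  rw [(hasFDerivAt_const_smul_norm_rpow_smul hx k γ).fderiv]
  simp only [smul_add, add_apply, smul_apply,
    ContinuousLinearMap.id_apply, ContinuousLinearMap.smulRight_apply, coe_innerSL_apply,
    EuclideanSpace.inner_single_right, conj_trivial, one_mul, smul_eq_mul, mul_assoc,
    inner_add_left, PiLp.smul_apply, PiLp.single_eq_same, mul_one, ← sq, Finset.sum_add_distrib,
    Finset.sum_const, Finset.card_univ, Fintype.card_fin, nsmul_eq_mul, ← Finset.mul_sum, hsq]
  linear_combination k * γ * hpow

theorem pLap_eq_of_flux_eventuallyEq {p k γ : ℝ} {u : EuclideanSpace ℝ (Fin n) → ℝ}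
    (hx : x ≠ 0)
    (hflux : (fun y ↦ ‖gradient u y‖ ^ (p - 2) • gradient u y) =ᶠ[𝓝 x]
      fun z ↦ k • ‖z‖ ^ γ • z) :
    pLap p u x = k * (n + γ) * ‖x‖ ^ γ := by
  rw [pLap, hflux.fderiv_eq]
  exact sum_inner_fderiv_const_smul_norm_rpow_smul hx k γ

theorem pLap_const_mul_norm_rpow (p : ℝ) {c a : ℝ} (hca : 0 < c * a) (hx : x ≠ 0) :
    pLap p (fun y ↦ c * ‖y‖ ^ a) x =
      (c * a) ^ (p - 1) * (n + ((a - 1) * (p - 1) - 1)) * ‖x‖ ^ ((a - 1) * (p - 1) - 1) := by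
  refine pLap_eq_of_flux_eventuallyEq hx ?_
  filter_upwards [isOpen_compl_singleton.mem_nhds hx] with z (hz : z ≠ 0)
  have hz0 : 0 < ‖z‖ := norm_pos_iff.mpr hz
  have hk : 0 < c * a * ‖z‖ ^ (a - 2) := by positivity
  rw [(hasGradientAt_const_mul_norm_rpow hz c a).gradient, norm_smul_rpow_smul hk, smul_smul,
    show p - 2 + 1 = p - 1 by ring, mul_rpow hca.le (rpow_nonneg hz0.le _), ← rpow_mul hz0.le,
    mul_assoc, ← rpow_add hz0]
  ring_nf

end PLaplacian

theorem rpow_div_rpow_rpow {R s : ℝ} (hR : 0 ≤ R) (hs : 0 ≤ s) (a b c : ℝ) :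
    (R ^ a / s ^ b) ^ c = R ^ (a * c) * s ^ (-(b * c)) := by
  rw [div_rpow (rpow_nonneg hR a) (rpow_nonneg hs b), ← rpow_mul hR, ← rpow_mul hs,
    rpow_neg hs, div_eq_mul_inv]

theorem hasDerivAt_neg_rpow {t : ℝ} (ht : t < 0) (e : ℝ) :
    HasDerivAt (fun τ ↦ (-τ) ^ e) (-(e * (-t) ^ (e - 1))) t := by
  convert (hasDerivAt_neg t).rpow_const (p := e) (Or.inl (by linarith)) using 1
  ring

theorem one_sub_two_div_rpow_mul_div_rpow {p : ℝ} (hp : 2 < p) (r : ℝ) :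
    (1 - 2 / p) ^ r * (p / (p - 2)) ^ r = 1 := by
  have hp0 : 0 < p := by linarith
  have hp2 : 0 < p - 2 := by linarith
  have h : (1 - 2 / p) * (p / (p - 2)) = 1 := by field_simp
  rw [← mul_rpow (by rw [one_sub_div hp0.ne']; positivity) (by positivity), h, one_rpow]

theorem barrier_amplitude_spec {p β lam : ℝ} (hp : 2 < p) (hβ : 0 ≤ β) (hlam : 0 < lam) :
    ((β / lam * (1 - 2 / p) ^ (p - 1)) ^ (1 / (p - 2))) ^ (p - 2) * (p / (p - 2)) ^ (p - 1)
      * lam = β := by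
  have hp2 : 0 < p - 2 := by linarith
  have hbase : 0 ≤ β / lam * (1 - 2 / p) ^ (p - 1) := by
    have : 0 ≤ 1 - 2 / p := by rw [one_sub_div (by linarith)]; positivity
    positivity
  rw [← rpow_mul hbase, one_div_mul_cancel hp2.ne', rpow_one, mul_assoc (β / lam),
    one_sub_two_div_rpow_mul_div_rpow hp]
  field_simp

theorem barrier_identity {p n A β α lam s R : ℝ} (hp : 2 < p) (hA : 0 < A) (hs : 0 < s)
    (hα : α = p / (p - 2)) (hlam : lam = n * (p - 2) + p) :
    A * R ^ α * (β / (p - 2) * s ^ (-(β / (p - 2)) - 1))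
        - (A * s ^ (-(β / (p - 2))) * α) ^ (p - 1) * (n + α) * R ^ α =
      A * R ^ α / ((p - 2) * s ^ (β / (p - 2) + 1))
        * (β - A ^ (p - 2) * α ^ (p - 1) * lam * s ^ (1 - β)) := by
  have hp2 : p - 2 ≠ 0 := by linarith
  have hA' : A ^ (p - 1) = A * A ^ (p - 2) := by
    rw [← rpow_one_add' hA.le (by linarith)]
    ring_nf
  have hs' : s ^ (-(β / (p - 2)) * (p - 1)) = s ^ (1 - β) * s ^ (-(β / (p - 2)) - 1) := by
    rw [← rpow_add hs]
    congr 1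
    field_simp
    ring
  have hsinv : s ^ (-(β / (p - 2)) - 1) = (s ^ (β / (p - 2) + 1))⁻¹ := by
    rw [← rpow_neg hs.le]
    ring_nf
  have hlam' : (n + α) * (p - 2) = lam := by
    rw [hα, hlam]
    field_simp
  have hα0 : 0 ≤ α := by rw [hα]; exact div_nonneg (by linarith) (by linarith)
  rw [mul_rpow (by positivity) hα0, mul_rpow hA.le (by positivity), ← rpow_mul hs.le,
    hA', hs', ← hlam', hsinv]
  field_simp

theorem sub_mul_rpow_nonneg {β s : ℝ} (hβ0 : 0 ≤ β) (hβ1 : β ≤ 1) (hs0 : 0 ≤ s) (hs1 : s ≤ 1) :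
    0 ≤ β - β * s ^ (1 - β) := by
  have : s ^ (1 - β) ≤ 1 := rpow_le_one hs0 hs1 (sub_nonneg.mpr hβ1)
  nlinarith

theorem small_barrier_supersolution_general (p q β : ℝ) (hp : 2 < p) (n : ℕ)
    (lam α A : ℝ) (hlam : lam = n * (p - 2) + p) (hα : α = p / (p - 2))
    (hβ0 : 0 < β) (hβ : β < p * q) (hq : p * q ≤ 1)
    (hA : A = (β / lam * (1 - 2 / p) ^ (p - 1)) ^ (1 / (p - 2)))
    (Θ : Set (EuclideanSpace ℝ (Fin n) × ℝ))
    (hΘ : Θ = {z : EuclideanSpace ℝ (Fin n) × ℝ |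
      ‖z.1‖ < (-z.2) ^ q ∧ -1 < z.2 ∧ z.2 < 0})
    (u : EuclideanSpace ℝ (Fin n) → ℝ → ℝ)
    (hu : ∀ x t, u x t = A * (‖x‖ ^ p / (-t) ^ β) ^ (1 / (p - 2)))
    (x : EuclideanSpace ℝ (Fin n)) (t : ℝ) (hmem : (x, t) ∈ Θ) (hx : x ≠ 0) :
    deriv (u x) t - pLap p (fun y => u y t) x =
      A * ‖x‖ ^ α / ((p - 2) * (-t) ^ (β / (p - 2) + 1)) *
        (β - A ^ (p - 2) * α ^ (p - 1) * lam * (-t) ^ (1 - β)) ∧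
    deriv (u x) t - pLap p (fun y => u y t) x ≥ 0 := by
  rw [hΘ] at hmem
  obtain ⟨-, ht1, ht0⟩ := hmem
  set s := -t
  have hs : 0 < s := neg_pos.mpr ht0
  have hp2 : 0 < p - 2 := by linarith
  have hα0 : 0 < α := by rw [hα]; exact div_pos (by linarith) hp2
  have hlam0 : 0 < lam := by rw [hlam]; positivity
  have hA0 : 0 < A := by
    have : 0 < 1 - 2 / p := by rw [one_sub_div (by linarith)]; exact div_pos hp2 (by linarith)
    rw [hA]; positivity
  have hpα : p * (1 / (p - 2)) = α := by rw [hα]; ring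
  have hu' : ∀ y, ∀ τ < 0, u y τ = A * ‖y‖ ^ α * (-τ) ^ (-(β / (p - 2))) := fun y τ hτ ↦ by
    rw [hu, rpow_div_rpow_rpow (norm_nonneg y) (by linarith) .., hpα, mul_one_div, mul_assoc]
  have hdt : deriv (u x) t = A * ‖x‖ ^ α * (β / (p - 2) * (-t) ^ (-(β / (p - 2)) - 1)) := by
    have hev : u x =ᶠ[𝓝 t] fun τ ↦ A * ‖x‖ ^ α * (-τ) ^ (-(β / (p - 2))) :=
      eventually_lt_nhds ht0 |>.mono (hu' x)
    rw [hev.deriv_eq, ((hasDerivAt_neg_rpow ht0 _).const_mul _).deriv, neg_mul, neg_neg]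
  have hspace : (fun y ↦ u y t) = fun y ↦ A * (-t) ^ (-(β / (p - 2))) * ‖y‖ ^ α := by
    ext y
    rw [hu' y t ht0]
    ring
  have hγ : (α - 1) * (p - 1) - 1 = α := by rw [hα]; field_simp; ring
  have hΔ : pLap p (fun y ↦ u y t) x =
      (A * (-t) ^ (-(β / (p - 2))) * α) ^ (p - 1) * (n + α) * ‖x‖ ^ α := by
    have hc : 0 < A * (-t) ^ (-(β / (p - 2))) * α := by positivity
    rw [hspace, pLap_const_mul_norm_rpow p hc hx, hγ]
  have hid := barrier_identity (R := ‖x‖) (β := β) hp hA0 hs hα hlam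
  rw [hdt, hΔ, hid]
  refine ⟨rfl, mul_nonneg (by positivity) ?_⟩
  rw [hα, hA, barrier_amplitude_spec hp hβ0.le hlam0]
  exact sub_mul_rpow_nonneg hβ0.le (by linarith) (by linarith) (by linarith)

/-- Degenerate case: with `λ = n(p-2)+p`, `α = p/(p-2)`, `0 < β < pq ≤ 1` and
`A = (β(1-2/p)^{p-1}/λ)^{1/(p-2)}`, the function `u(x,t) = A(|x|^p/(-t)^β)^{1/(p-2)}`
satisfies `∂_t u - Δ_p u = (A|x|^α/((p-2)(-t)^{β/(p-2)+1}))(β - A^{p-2}α^{p-1}λ(-t)^{1-β}) ≥ 0`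
in `Θ ∩ {x ≠ 0}`. -/
theorem small_barrier_supersolution (p q β : ℝ) (hp : 2 < p) (n : ℕ) (hn : 1 ≤ n)
    (lam α A : ℝ) (hlam : lam = n * (p - 2) + p) (hα : α = p / (p - 2))
    (hβ0 : 0 < β) (hβ : β < p * q) (hq : p * q ≤ 1)
    (hA : A = (β / lam * (1 - 2 / p) ^ (p - 1)) ^ (1 / (p - 2)))
    (Θ : Set (EuclideanSpace ℝ (Fin n) × ℝ))
    (hΘ : Θ = {z : EuclideanSpace ℝ (Fin n) × ℝ |
      ‖z.1‖ < (-z.2) ^ q ∧ -1 < z.2 ∧ z.2 < 0})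
    (u : EuclideanSpace ℝ (Fin n) → ℝ → ℝ)
    (hu : ∀ x t, u x t = A * (‖x‖ ^ p / (-t) ^ β) ^ (1 / (p - 2)))
    (x : EuclideanSpace ℝ (Fin n)) (t : ℝ) (hmem : (x, t) ∈ Θ) (hx : x ≠ 0) :
    deriv (u x) t - pLap p (fun y => u y t) x =
      A * ‖x‖ ^ α / ((p - 2) * (-t) ^ (β / (p - 2) + 1)) *
        (β - A ^ (p - 2) * α ^ (p - 1) * lam * (-t) ^ (1 - β)) ∧
    deriv (u x) t - pLap p (fun y => u y t) x ≥ 0 :=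
  small_barrier_supersolution_general p q β hp n lam α A hlam hα hβ0 hβ hq hA Θ hΘ u hu x t hmem hx
end
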